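/- arXiv:math/0602096 — 2 statements merged into one kernel-verified Lean document; each statement's English description precedes it below -/
import Mathlib

section
/- Let k be a field, V a finite-dimensional k-vector space, and N : V → V a nilpotent endomorphism. Then there exists a unique increasing filtration (M_k)_{k ∈ ℤ} of V by subspaces (M_k ⊆ M_{k+1}, M_k = 0 for k sufficiently small, M_k = V for k sufficiently large) such that N(M_k) ⊆ M_{k−2} for all k, and such that for every k ≥ 0 the map induced by N^k from gr_k = M_k/M_{k−1} to gr_{−k} = M_{−k}/M_{−k−1} is an isomorphism. -/
open Submodule Module

section MonodromyAux

variable {k : Type*} [Field k] {V : Type*} [AddCommGroup V] [Module k V]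

/-- The conditions defining the monodromy filtration of `N` supported on a stable
subspace `P`. -/
def MonoFil (N : V →ₗ[k] V) (P : Submodule k V) (M : ℤ → Submodule k V) : Prop :=
  Monotone M ∧ (∀ i, M i ≤ P) ∧
  (∃ a : ℤ, ∀ i ≤ a, M i = ⊥) ∧
  (∃ b : ℤ, ∀ i : ℤ, b ≤ i → M i = P) ∧
  (∀ i : ℤ, ∀ x ∈ M i, N x ∈ M (i - 2)) ∧
  (∀ j : ℕ,
    (Submodule.map (N ^ j) (M (j : ℤ)) ⊔ M (-(j : ℤ) - 1) = M (-(j : ℤ))) ∧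
    (∀ x ∈ M (j : ℤ), (N ^ j) x ∈ M (-(j : ℤ) - 1) → x ∈ M ((j : ℤ) - 1)))

lemma shift_iter {N : V →ₗ[k] V} {M : ℤ → Submodule k V}
    (hs : ∀ i : ℤ, ∀ x ∈ M i, N x ∈ M (i - 2)) :
    ∀ j : ℕ, ∀ i : ℤ, ∀ x ∈ M i, (N ^ j) x ∈ M (i - 2 * j) := by
  intro j
  induction j with
  | zero => intro i x hx; simpa using hx
  | succ j ih =>
    intro i x hx
    have h2 := hs _ _ (ih i x hx)
    have e : i - 2 * (j : ℤ) - 2 = i - 2 * ((j + 1 : ℕ) : ℤ) := by push_cast; ring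
    rw [e] at h2
    have e2 : (N ^ (j + 1)) x = N ((N ^ j) x) := by
      rw [pow_succ']; rfl
    rw [e2]
    exact h2


lemma monoFil_sup {N : V →ₗ[k] V} {A B P : Submodule k V} {MA MB : ℤ → Submodule k V}
    (hAB : A ⊓ B = ⊥) (hP : A ⊔ B = P)
    (hA : MonoFil N A MA) (hB : MonoFil N B MB) :
    MonoFil N P (fun i => MA i ⊔ MB i) := by
  obtain ⟨hAm, hAle, ⟨aA, haA⟩, ⟨bA, hbA⟩, hAs, hAj⟩ := hA
  obtain ⟨hBm, hBle, ⟨aB, haB⟩, ⟨bB, hbB⟩, hBs, hBj⟩ := hB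
  refine ⟨fun i j hij => sup_le_sup (hAm hij) (hBm hij),
    fun i => hP ▸ sup_le_sup (hAle i) (hBle i),
    ⟨min aA aB, fun i hi => by
      show MA i ⊔ MB i = ⊥
      rw [haA i (le_trans hi (min_le_left _ _)), haB i (le_trans hi (min_le_right _ _)),
        sup_bot_eq]⟩,
    ⟨max bA bB, fun i hi => by
      show MA i ⊔ MB i = P
      rw [hbA i (le_trans (le_max_left _ _) hi), hbB i (le_trans (le_max_right _ _) hi), hP]⟩,
    ?_, ?_⟩
  · intro i x hx
    obtain ⟨u, hu, w, hw, rfl⟩ := Submodule.mem_sup.mp hx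
    rw [map_add]
    exact Submodule.add_mem _ (Submodule.mem_sup_left (hAs i u hu))
      (Submodule.mem_sup_right (hBs i w hw))
  · intro j
    constructor
    · rw [Submodule.map_sup, sup_sup_sup_comm, (hAj j).1, (hBj j).1]
    · intro x hx hNx
      obtain ⟨u, hu, w, hw, rfl⟩ := Submodule.mem_sup.mp hx
      rw [map_add] at hNx
      obtain ⟨u', hu', w', hw', heq⟩ := Submodule.mem_sup.mp hNx
      have hjuA : (N ^ j) u ∈ A := hAle _ (shift_iter hAs j _ u hu)
      have hjwB : (N ^ j) w ∈ B := hBle _ (shift_iter hBs j _ w hw)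
      have hsub : (N ^ j) u - u' ∈ A ⊓ B := by
        refine ⟨sub_mem hjuA (hAle _ hu'), ?_⟩
        have h5 : (N ^ j) u - u' = w' - (N ^ j) w := by
          rw [sub_eq_sub_iff_add_eq_add]
          exact heq.symm.trans (add_comm u' w')
        rw [h5]
        exact sub_mem (hBle _ hw') hjwB
      rw [hAB, Submodule.mem_bot, sub_eq_zero] at hsub
      have hwB' : (N ^ j) w = w' := by
        have h6 := heq
        rw [← hsub] at h6
        exact (add_left_cancel h6).symm
      exact Submodule.add_mem _
        (Submodule.mem_sup_left ((hAj j).2 u hu (hsub ▸ hu')))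
        (Submodule.mem_sup_right ((hBj j).2 w hw (hwB' ▸ hw')))


lemma monoFil_block {N : V →ₗ[k] V} (v : V) (n : ℕ) (hn1 : 1 ≤ n)
    (hv : (N ^ (n - 1)) v ≠ 0) (hvn : (N ^ n) v = 0) :
    MonoFil N (span k (Set.range fun i : ℕ => (N ^ i) v))
      (fun c => span k ((fun i : ℕ => (N ^ i) v) '' {i : ℕ | (n : ℤ) - 1 - 2 * i ≤ c})) := by
  set g : ℕ → V := fun i : ℕ => (N ^ i) v with hg
  have g_pow : ∀ j i : ℕ, (N ^ j) (g i) = g (i + j) := by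
    intro j i
    show (N ^ j) ((N ^ i) v) = (N ^ (i + j)) v
    rw [add_comm i j, pow_add, Module.End.mul_apply]
  have g_zero : ∀ i : ℕ, n ≤ i → g i = 0 := by
    intro i hi
    have : g i = (N ^ (i - n)) (g n) := by
      rw [g_pow, Nat.add_sub_cancel' hi]
    rw [this]
    show (N ^ (i - n)) ((N ^ n) v) = 0
    rw [hvn, map_zero]
  -- generic map estimate
  have hmap : ∀ (j : ℕ) (c : ℤ),
      Submodule.map (N ^ j) (span k (g '' {i : ℕ | (n : ℤ) - 1 - 2 * i ≤ c}))
        ≤ span k (g '' {i : ℕ | (n : ℤ) - 1 - 2 * i ≤ c - 2 * j}) := by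
    intro j c
    rw [Submodule.map_span]
    apply span_le.mpr
    rintro y ⟨x, ⟨i, hi, rfl⟩, rfl⟩
    apply subset_span
    exact ⟨i + j, by simp only [Set.mem_setOf_eq] at hi ⊢; push_cast; omega, (g_pow j i).symm⟩
  refine ⟨?_, ?_, ⟨-(n : ℤ), ?_⟩, ⟨(n : ℤ) - 1, ?_⟩, ?_, ?_⟩
  · intro c d hcd
    apply span_mono
    apply Set.image_mono
    intro i hi
    simp only [Set.mem_setOf_eq] at hi ⊢
    omega
  · intro c
    exact span_mono (Set.image_subset_range _ _)
  · intro c hc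
    show span k (g '' {i : ℕ | (n : ℤ) - 1 - 2 * i ≤ c}) = ⊥
    rw [span_eq_bot]
    rintro x ⟨i, hi, rfl⟩
    simp only [Set.mem_setOf_eq] at hi
    exact g_zero i (by omega)
  · intro c hc
    show span k (g '' {i : ℕ | (n : ℤ) - 1 - 2 * i ≤ c}) = span k (Set.range g)
    have he : g '' {i : ℕ | (n : ℤ) - 1 - 2 * i ≤ c} = Set.range g := by
      rw [← Set.image_univ]
      apply congrArg
      ext i
      simp only [Set.mem_setOf_eq, Set.mem_univ, iff_true]
      omega
    rw [he]
  · intro c x hx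
    have h1 := hmap 1 c
    have e : c - 2 * ((1 : ℕ) : ℤ) = c - 2 := by push_cast; ring
    rw [e] at h1
    have : N x = (N ^ 1) x := by rw [pow_one]
    rw [this]
    exact h1 (Submodule.mem_map_of_mem hx)
  · intro j
    constructor
    · apply le_antisymm
      · apply sup_le
        · have h1 := hmap j (j : ℤ)
          have e : (j : ℤ) - 2 * (j : ℤ) = -(j : ℤ) := by ring
          rw [e] at h1
          exact h1
        · apply span_mono
          apply Set.image_mono
          intro i hi
          simp only [Set.mem_setOf_eq] at hi ⊢
          omega
      · apply span_le.mpr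
        rintro y ⟨i, hi, rfl⟩
        simp only [Set.mem_setOf_eq] at hi
        by_cases hi' : (n : ℤ) - 1 - 2 * i ≤ -(j : ℤ) - 1
        · exact Submodule.mem_sup_right (subset_span ⟨i, hi', rfl⟩)
        · have heq : (n : ℤ) - 1 - 2 * i = -(j : ℤ) := by omega
          by_cases hni : n ≤ i
          · rw [hg]
            show (N ^ i) v ∈ _
            have : (N ^ i) v = g i := rfl
            rw [this, g_zero i hni]
            exact zero_mem _
          · have hji : j ≤ i := by omega
            apply Submodule.mem_sup_left
            have hgi : g i = (N ^ j) (g (i - j)) := by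
              rw [g_pow, Nat.sub_add_cancel hji]
            rw [hg]
            show g i ∈ _
            rw [hgi]
            apply Submodule.mem_map_of_mem
            apply subset_span
            exact ⟨i - j, by simp only [Set.mem_setOf_eq]; omega, rfl⟩
    · intro x hx hNx
      by_cases hex : ∃ i₀ : ℕ, (n : ℤ) - 1 - 2 * i₀ = (j : ℤ)
      · obtain ⟨i₀, hw⟩ := hex
        have hins : {i : ℕ | (n : ℤ) - 1 - 2 * i ≤ (j : ℤ)}
            = insert i₀ {i : ℕ | (n : ℤ) - 1 - 2 * i ≤ (j : ℤ) - 1} := by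
          ext i
          simp only [Set.mem_setOf_eq, Set.mem_insert_iff]
          omega
        have hx' : x ∈ span k (g '' {i : ℕ | (n : ℤ) - 1 - 2 * i ≤ (j : ℤ)}) := hx
        rw [hins, Set.image_insert_eq] at hx'
        obtain ⟨a, z, hz, hxz⟩ := Submodule.mem_span_insert.mp hx'
        -- N^j z lands in level -j-1
        have hz2 : (N ^ j) z ∈ span k (g '' {i : ℕ | (n : ℤ) - 1 - 2 * i ≤ -(j : ℤ) - 1}) := by
          have h1 := hmap j ((j : ℤ) - 1)
          have e : (j : ℤ) - 1 - 2 * (j : ℤ) = -(j : ℤ) - 1 := by ring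
          rw [e] at h1
          exact h1 (Submodule.mem_map_of_mem hz)
        have hax : a • g (i₀ + j) ∈ span k (g '' {i : ℕ | (n : ℤ) - 1 - 2 * i ≤ -(j : ℤ) - 1}) := by
          have hNxval : (N ^ j) x = a • g (i₀ + j) + (N ^ j) z := by
            rw [hxz, map_add, map_smul, g_pow]
          have : a • g (i₀ + j) = (N ^ j) x - (N ^ j) z := by
            rw [hNxval]; abel
          rw [this]
          exact sub_mem hNx hz2
        -- kernel argument
        have ht : i₀ + j ≤ n - 1 := by omega
        set r : ℕ := n - 1 - (i₀ + j) with hr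
        have hker : span k (g '' {i : ℕ | (n : ℤ) - 1 - 2 * i ≤ -(j : ℤ) - 1})
            ≤ LinearMap.ker (N ^ r) := by
          apply span_le.mpr
          rintro y ⟨i, hi, rfl⟩
          simp only [Set.mem_setOf_eq] at hi
          rw [SetLike.mem_coe, LinearMap.mem_ker, g_pow]
          exact g_zero _ (by omega)
        have hzero : a • g (n - 1) = 0 := by
          have h2 := hker hax
          rw [LinearMap.mem_ker, map_smul, g_pow] at h2
          have e : i₀ + j + r = n - 1 := by omega
          rwa [e] at h2
        have ha : a = 0 := by
          rcases smul_eq_zero.mp hzero with h | h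
          · exact h
          · exact absurd h hv
        rw [hxz, ha, zero_smul, zero_add]
        exact hz
      · push_neg at hex
        have hss : {i : ℕ | (n : ℤ) - 1 - 2 * i ≤ (j : ℤ)}
            ⊆ {i : ℕ | (n : ℤ) - 1 - 2 * i ≤ (j : ℤ) - 1} := by
          intro i hi
          simp only [Set.mem_setOf_eq] at hi ⊢
          have := hex i
          omega
        exact span_mono (Set.image_mono hss) hx


lemma monoFil_bot (N : V →ₗ[k] V) : MonoFil N ⊥ (fun _ => ⊥) := by
  refine ⟨monotone_const, fun i => le_rfl, ⟨0, fun _ _ => rfl⟩, ⟨0, fun _ _ => rfl⟩, ?_, ?_⟩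
  · intro i x hx
    rw [Submodule.mem_bot] at hx ⊢
    rw [hx, map_zero]
  · intro j
    refine ⟨by rw [Submodule.map_bot, sup_bot_eq], ?_⟩
    intro x hx _
    exact hx

lemma monoFil_exists [FiniteDimensional k V] (N : V →ₗ[k] V) (hN : IsNilpotent N) :
    ∀ m : ℕ, ∀ P : Submodule k V, finrank k P < m → (∀ x ∈ P, N x ∈ P) → ∃ M, MonoFil N P M := by
  intro m
  induction m with
  | zero => intro P hP _; omega
  | succ m ih =>
    intro P hP hstab
    classical
    by_cases hbot : P = ⊥
    · exact ⟨fun _ => ⊥, hbot ▸ monoFil_bot N⟩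
    -- stable under powers
    have hstabp : ∀ (j : ℕ) (x : V), x ∈ P → (N ^ j) x ∈ P := by
      intro j
      induction j with
      | zero => intro x hx; simpa using hx
      | succ j ihp =>
        intro x hx
        have : (N ^ (j + 1)) x = N ((N ^ j) x) := by rw [pow_succ']; rfl
        rw [this]
        exact hstab _ (ihp x hx)
    -- minimal annihilating exponent on P
    obtain ⟨m0, hm0⟩ := hN
    have hQex : ∃ c : ℕ, ∀ x ∈ P, (N ^ c) x = 0 := ⟨m0, fun x _ => by rw [hm0]; rfl⟩
    set n := Nat.find hQex with hn
    have hnall : ∀ x ∈ P, (N ^ n) x = 0 := Nat.find_spec hQex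
    have hn1 : 1 ≤ n := by
      rcases Nat.eq_zero_or_pos n with h0 | h; swap
      · exact h
      · exfalso
        apply hbot
        rw [eq_bot_iff]
        intro x hx
        have := hnall x hx
        rw [h0, pow_zero] at this
        simpa using this
    have hmin : ¬ ∀ x ∈ P, (N ^ (n - 1)) x = 0 := Nat.find_min hQex (by omega)
    push_neg at hmin
    obtain ⟨v, hvP, hv⟩ := hmin
    set g : ℕ → V := fun i : ℕ => (N ^ i) v with hg
    have g_pow : ∀ j i : ℕ, (N ^ j) (g i) = g (i + j) := by
      intro j i
      show (N ^ j) ((N ^ i) v) = (N ^ (i + j)) v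
      rw [add_comm i j, pow_add, Module.End.mul_apply]
    have hvn : (N ^ n) v = 0 := hnall v hvP
    have g_zero : ∀ i : ℕ, n ≤ i → g i = 0 := by
      intro i hi
      have h1 : g i = (N ^ (i - n)) (g n) := by rw [g_pow, Nat.add_sub_cancel' hi]
      rw [h1]
      show (N ^ (i - n)) ((N ^ n) v) = 0
      rw [hvn, map_zero]
    have gP : ∀ i : ℕ, g i ∈ P := fun i => hstabp i v hvP
    -- the dual vector
    obtain ⟨φ, hφ⟩ : ∃ φ : Module.Dual k V, φ (g (n - 1)) ≠ 0 := by
      by_contra h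
      push_neg at h
      exact hv ((Module.forall_dual_apply_eq_zero_iff k _).mp h)
    set J : Submodule k V := span k (Set.range g) with hJ
    have hJP : J ≤ P := span_le.mpr (by rintro x ⟨i, rfl⟩; exact gP i)
    set W : Submodule k V := P ⊓ (⨅ t ∈ Finset.range n, LinearMap.ker (φ ∘ₗ (N ^ t))) with hW
    have hWmem : ∀ x : V, x ∈ W ↔ x ∈ P ∧ ∀ t, t < n → φ ((N ^ t) x) = 0 := by
      intro x
      simp [hW, Submodule.mem_inf, Submodule.mem_iInf, LinearMap.mem_ker, Finset.mem_range]
    have hWstab : ∀ x ∈ W, N x ∈ W := by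
      intro x hx
      rw [hWmem] at hx ⊢
      refine ⟨hstab x hx.1, ?_⟩
      intro t ht
      have e : (N ^ t) (N x) = (N ^ (t + 1)) x := by
        rw [pow_succ, Module.End.mul_apply]
      rw [e]
      rcases lt_or_eq_of_le (Nat.succ_le_of_lt ht) with h' | h'
      · exact hx.2 (t + 1) h'
      · rw [show t + 1 = n from h', hnall x hx.1, map_zero]
    -- J ⊓ W = ⊥
    have hkerspan : ∀ d : ℕ, span k (g '' {i : ℕ | d + 1 ≤ i}) ≤ LinearMap.ker (N ^ (n - 1 - d)) := by
      intro d
      apply span_le.mpr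
      rintro y ⟨i, hi, rfl⟩
      simp only [Set.mem_setOf_eq] at hi
      rw [SetLike.mem_coe, LinearMap.mem_ker, g_pow]
      exact g_zero _ (by omega)
    have haux : ∀ d : ℕ, ∀ x, x ∈ W → x ∈ span k (g '' {i : ℕ | n - d ≤ i}) → x = 0 := by
      intro d
      induction d with
      | zero =>
        intro x _ hx
        have hz : span k (g '' {i : ℕ | n - 0 ≤ i}) = ⊥ := by
          rw [span_eq_bot]
          rintro y ⟨i, hi, rfl⟩
          simp only [Set.mem_setOf_eq] at hi
          exact g_zero i (by omega)
        rw [hz] at hx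
        simpa using hx
      | succ d ihd =>
        intro x hxW hx
        by_cases hd : n - (d + 1) = n - d
        · exact ihd x hxW (by rw [← hd]; exact hx)
        · have hdn : d + 1 ≤ n := by omega
          set q : ℕ := n - (d + 1) with hq
          have hq1 : q + 1 = n - d := by omega
          have hins : {i : ℕ | q ≤ i} = insert q {i : ℕ | q + 1 ≤ i} := by
            ext i
            simp only [Set.mem_setOf_eq, Set.mem_insert_iff]
            omega
          rw [hins, Set.image_insert_eq] at hx
          obtain ⟨a, z, hz, hxz⟩ := Submodule.mem_span_insert.mp hx
          have hzk : (N ^ (n - 1 - q)) z = 0 := LinearMap.mem_ker.mp (hkerspan q hz)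
          have hxk : φ ((N ^ (n - 1 - q)) x) = 0 := ((hWmem x).mp hxW).2 _ (by omega)
          have hcalc : (N ^ (n - 1 - q)) x = a • g (n - 1) := by
            rw [hxz, map_add, map_smul, g_pow, hzk, add_zero]
            congr 2
            omega
          rw [hcalc, map_smul, smul_eq_mul] at hxk
          have ha : a = 0 := by
            rcases mul_eq_zero.mp hxk with h | h
            · exact h
            · exact absurd h hφ
          have hxz2 : x = z := by rw [hxz, ha, zero_smul, zero_add]
          rw [hxz2]
          apply ihd z (hxz2 ▸ hxW)
          rw [← hq1]
          exact hz
    have hJW : J ⊓ W = ⊥ := by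
      rw [eq_bot_iff]
      rintro x ⟨hxJ, hxW⟩
      rw [Submodule.mem_bot]
      apply haux n x hxW
      have : Set.range g = g '' {i : ℕ | n - n ≤ i} := by
        rw [← Set.image_univ]
        apply congrArg
        ext i
        simp
      rw [hJ, this] at hxJ
      exact hxJ
    -- J ⊔ W = P
    have hJWP : J ⊔ W = P := by
      apply le_antisymm (sup_le hJP inf_le_left)
      intro x hxP
      have claim : ∀ c : ℕ, ∃ u ∈ J, ∀ t, n - c ≤ t → t < n → φ ((N ^ t) (x - u)) = 0 := by
        intro c
        induction c with
        | zero =>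
          exact ⟨0, zero_mem _, fun t ht htn => absurd htn (by omega)⟩
        | succ c ihc =>
          obtain ⟨u, huJ, hu⟩ := ihc
          by_cases hd : n - (c + 1) = n - c
          · exact ⟨u, huJ, fun t ht htn => hu t (by omega) htn⟩
          · have hdn : c + 1 ≤ n := by omega
            set q : ℕ := n - (c + 1) with hq
            have hq1 : q + 1 = n - c := by omega
            set a : k := φ ((N ^ q) (x - u)) / φ (g (n - 1)) with ha
            refine ⟨u + a • g (n - 1 - q), add_mem huJ (smul_mem _ _ (subset_span ⟨n - 1 - q, rfl⟩)), ?_⟩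
            intro t ht htn
            have hsub : x - (u + a • g (n - 1 - q)) = (x - u) - a • g (n - 1 - q) := by abel
            rw [hsub, map_sub, map_smul, g_pow, map_sub, map_smul, smul_eq_mul]
            rcases lt_or_eq_of_le ht with h' | h'
            · have h1 : φ ((N ^ t) (x - u)) = 0 := hu t (by omega) htn
              have h2 : g (n - 1 - q + t) = 0 := g_zero _ (by omega)
              rw [h1, h2, map_zero, mul_zero, sub_zero]
            · rw [← h']
              have h2 : n - 1 - q + q = n - 1 := by omega
              rw [h2, ha, div_mul_cancel₀ _ hφ, sub_self]
      obtain ⟨u, huJ, hu⟩ := claim n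
      have hxuW : x - u ∈ W :=
        (hWmem _).mpr ⟨sub_mem hxP (hJP huJ), fun t htn => hu t (by omega) htn⟩
      have : u + (x - u) ∈ J ⊔ W :=
        Submodule.add_mem _ (Submodule.mem_sup_left huJ) (Submodule.mem_sup_right hxuW)
      rwa [add_sub_cancel] at this
    -- W is strictly smaller
    have hvW : v ∉ W := by
      intro hvW
      exact hφ (((hWmem v).mp hvW).2 (n - 1) (by omega))
    have hWP : W < P := lt_of_le_of_ne inf_le_left (fun h => hvW (by rw [h]; exact hvP))
    have hfr : finrank k W < finrank k P := Submodule.finrank_lt_finrank_of_lt hWP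
    obtain ⟨MW, hMW⟩ := ih W (by omega) hWstab
    have hMJ := monoFil_block (N := N) v n hn1 hv hvn
    exact ⟨_, monoFil_sup hJW hJWP hMJ hMW⟩


lemma monoFil_top_bot {N : V →ₗ[k] V} {n : ℕ} (hn : N ^ n = 0) {M : ℤ → Submodule k V}
    (h : MonoFil N ⊤ M) :
    (∀ i : ℤ, (n : ℤ) - 1 ≤ i → M i = ⊤) ∧ (∀ i : ℤ, i ≤ -(n : ℤ) → M i = ⊥) := by
  obtain ⟨hm, -, ⟨a, ha⟩, ⟨b, hb⟩, hs, hj⟩ := h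
  have hpow0 : ∀ j : ℕ, n ≤ j → (N ^ j : V →ₗ[k] V) = 0 := by
    intro j hj'
    rw [← Nat.add_sub_cancel' hj', pow_add, hn, zero_mul]
  have hstep_top : ∀ j : ℕ, n ≤ j → M (j : ℤ) = M ((j : ℤ) - 1) := by
    intro j hj'
    apply le_antisymm
    · intro x hx
      apply (hj j).2 x hx
      rw [hpow0 j hj', LinearMap.zero_apply]
      exact zero_mem _
    · exact hm (by omega)
  have hstep_bot : ∀ j : ℕ, n ≤ j → M (-(j : ℤ)) = M (-(j : ℤ) - 1) := by
    intro j hj'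
    rw [← (hj j).1, hpow0 j hj', Submodule.map_zero, bot_sup_eq]
  have htopc : ∀ c : ℕ, M ((n : ℤ) - 1 + c) = M ((n : ℤ) - 1) := by
    intro c
    induction c with
    | zero => norm_num
    | succ c ihc =>
      have e1 : (n : ℤ) - 1 + ((c + 1 : ℕ) : ℤ) = ((n + c : ℕ) : ℤ) := by push_cast; ring
      have e2 : ((n + c : ℕ) : ℤ) - 1 = (n : ℤ) - 1 + c := by push_cast; ring
      rw [e1, hstep_top (n + c) (by omega), e2, ihc]
  have hbotc : ∀ c : ℕ, M (-(n : ℤ) - c) = M (-(n : ℤ)) := by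
    intro c
    induction c with
    | zero => norm_num
    | succ c ihc =>
      have e1 : -(n : ℤ) - ((c + 1 : ℕ) : ℤ) = -((n + c : ℕ) : ℤ) - 1 := by push_cast; ring
      have e2 : -((n + c : ℕ) : ℤ) = -(n : ℤ) - c := by push_cast; ring
      rw [e1, ← hstep_bot (n + c) (by omega), e2, ihc]
  have hT : M ((n : ℤ) - 1) = ⊤ := by
    obtain ⟨c, hc⟩ : ∃ c : ℕ, b ≤ (n : ℤ) - 1 + c := ⟨(b - ((n : ℤ) - 1)).toNat, by omega⟩
    rw [← htopc c]
    exact hb _ hc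
  have hB : M (-(n : ℤ)) = ⊥ := by
    obtain ⟨c, hc⟩ : ∃ c : ℕ, -(n : ℤ) - c ≤ a := ⟨(-(n : ℤ) - a).toNat, by omega⟩
    rw [← hbotc c]
    exact ha _ hc
  constructor
  · intro i hi
    exact eq_top_iff.mpr (hT ▸ hm hi)
  · intro i hi
    exact eq_bot_iff.mpr (hB ▸ hm hi)

lemma monoFil_unique {N : V →ₗ[k] V} (hN : IsNilpotent N) {M M' : ℤ → Submodule k V}
    (h : MonoFil N ⊤ M) (h' : MonoFil N ⊤ M') : M = M' := by
  obtain ⟨n, hn⟩ := hN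
  obtain ⟨ht, hb⟩ := monoFil_top_bot hn h
  obtain ⟨ht', hb'⟩ := monoFil_top_bot hn h'
  have key : ∀ (M1 M2 : ℤ → Submodule k V), MonoFil N ⊤ M1 → MonoFil N ⊤ M2 →
      ∀ j : ℕ, M1 (j : ℤ) = M2 (j : ℤ) → M1 (-(j : ℤ) - 1) = M2 (-(j : ℤ) - 1) →
      (M1 ((j : ℤ) - 1) ≤ M2 ((j : ℤ) - 1)) ∧ (M1 (-(j : ℤ)) ≤ M2 (-(j : ℤ))) := by
    intro M1 M2 h1 h2 j he1 he2
    obtain ⟨hm1, -, -, -, hs1, hj1⟩ := h1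
    obtain ⟨hm2, -, -, -, hs2, hj2⟩ := h2
    constructor
    · intro x hx
      have hx1 : x ∈ M2 (j : ℤ) := he1 ▸ hm1 (by omega) hx
      have hx2 : (N ^ j) x ∈ M1 ((j : ℤ) - 1 - 2 * j) := shift_iter hs1 j _ x hx
      have e : (j : ℤ) - 1 - 2 * (j : ℤ) = -(j : ℤ) - 1 := by ring
      rw [e, he2] at hx2
      exact (hj2 j).2 x hx1 hx2
    · rw [← (hj1 j).1, he1, he2]
      apply sup_le
      · rintro y ⟨x, hx, rfl⟩
        have h3 := shift_iter hs2 j (j : ℤ) x hx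
        have e : (j : ℤ) - 2 * (j : ℤ) = -(j : ℤ) := by ring
        rwa [e] at h3
      · exact hm2 (by omega)
  have main : ∀ t : ℕ, ∀ i : ℤ, ((n : ℤ) - 1 - t ≤ i ∨ i ≤ -(n : ℤ) + t) → M i = M' i := by
    intro t
    induction t with
    | zero =>
      intro i hi
      rcases hi with hi | hi
      · rw [ht i (by omega), ht' i (by omega)]
      · rw [hb i (by omega), hb' i (by omega)]
    | succ t iht =>
      intro i hi
      by_cases hold : ((n : ℤ) - 1 - t ≤ i ∨ i ≤ -(n : ℤ) + t)
      · exact iht i hold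
      push_neg at hold
      obtain ⟨ho1, ho2⟩ := hold
      have hK : (0 : ℤ) ≤ (n : ℤ) - 2 - t := by
        rcases hi with hi | hi <;> omega
      set j : ℕ := n - 1 - t with hjdef
      have hjc : (j : ℤ) = (n : ℤ) - 1 - t := by omega
      have he1 : M (j : ℤ) = M' (j : ℤ) := iht _ (Or.inl (by omega))
      have he2 : M (-(j : ℤ) - 1) = M' (-(j : ℤ) - 1) := iht _ (Or.inr (by omega))
      have k1 := key M M' h h' j he1 he2
      have k2 := key M' M h' h j he1.symm he2.symm
      rcases hi with hi | hi
      · have e : i = (j : ℤ) - 1 := by omega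
        rw [e]
        exact le_antisymm k1.1 k2.1
      · have e : i = -(j : ℤ) := by omega
        rw [e]
        exact le_antisymm k1.2 k2.2
  funext i
  obtain ⟨t, htt⟩ : ∃ t : ℕ, (n : ℤ) - 1 - t ≤ i := ⟨((n : ℤ) - 1 - i).toNat, by omega⟩
  exact main t i (Or.inl htt)

end MonodromyAux

/-- Existence and uniqueness of the monodromy filtration of a nilpotent endomorphism `N`
of a finite-dimensional vector space: an increasing exhaustive filtration `M` with
`N(M_k) ⊆ M_{k−2}` such that `N^k` induces an isomorphism `gr_k ≅ gr_{−k}` for all `k ≥ 0`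
(the induced map being surjective and injective on the graded pieces). -/
theorem stmt_15 {k : Type*} [Field k] {V : Type*} [AddCommGroup V] [Module k V]
    [FiniteDimensional k V] (N : V →ₗ[k] V) (hN : IsNilpotent N) :
    ∃! M : ℤ → Submodule k V,
      Monotone M ∧
      (∃ a : ℤ, ∀ i ≤ a, M i = ⊥) ∧
      (∃ b : ℤ, ∀ i : ℤ, b ≤ i → M i = ⊤) ∧
      (∀ i : ℤ, ∀ x ∈ M i, N x ∈ M (i - 2)) ∧
      (∀ j : ℕ,
        (Submodule.map (N ^ j) (M (j : ℤ)) ⊔ M (-(j : ℤ) - 1) = M (-(j : ℤ))) ∧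
        (∀ x ∈ M (j : ℤ), (N ^ j) x ∈ M (-(j : ℤ) - 1) → x ∈ M ((j : ℤ) - 1))) := by
  obtain ⟨M, hM⟩ := monoFil_exists N hN (Module.finrank k (⊤ : Submodule k V) + 1) ⊤
    (by omega) (fun x _ => Submodule.mem_top)
  refine ⟨M, ⟨hM.1, hM.2.2.1, hM.2.2.2.1, hM.2.2.2.2.1, hM.2.2.2.2.2⟩, ?_⟩
  intro M' hM'
  exact monoFil_unique hN
    ⟨hM'.1, fun i => le_top, hM'.2.1, hM'.2.2.1, hM'.2.2.2.1, hM'.2.2.2.2⟩ hM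
end

section
/- Let q = p^r with p prime, and let L be an algebraically closed field containing 𝔽_q. Let f(X) = X^{q^d} + a_{d−1} X^{q^{d−1}} + ⋯ + a_1 X^q + a_0 X ∈ L[X] be a monic q-linearized polynomial with a_0 ≠ 0. Then there exist α_1, …, α_d ∈ L, all nonzero, such that f = f_{α_d} ∘ f_{α_{d−1}} ∘ ⋯ ∘ f_{α_1}, where f_α(X) = X^q + αX; moreover α_1 α_2 ⋯ α_d = a_0. -/
open Polynomial

/-- The additive polynomial `f_α(X) = X^q + α X`. -/
noncomputable def addPoly (q : ℕ) {R : Type*} [CommRing R] (α : R) : R[X] :=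
  X ^ q + C α * X

/-- The iterated composite `f_{α_{n-1}} ∘ ⋯ ∘ f_{α_0}`. -/
noncomputable def addPolyComp (q : ℕ) {R : Type*} [CommRing R] (α : ℕ → R) : ℕ → R[X]
  | 0 => X
  | n + 1 => (addPoly q (α n)).comp (addPolyComp q α n)

lemma addPolyComp_shift (q : ℕ) {R : Type*} [CommRing R] (α : ℕ → R) (n : ℕ) :
    addPolyComp q α (n + 1) =
      (addPolyComp q (fun i => α (i + 1)) n).comp (addPoly q (α 0)) := by
  induction n with
  | zero => simp [addPolyComp]
  | succ n ih =>
    show (addPoly q (α (n+1))).comp (addPolyComp q α (n+1)) = _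
    rw [ih, ← Polynomial.comp_assoc]
    rfl

/-- Frobenius twist of the additive polynomial. -/
lemma addPoly_pow_q_pow {L : Type*} [Field L] (p : ℕ) [Fact p.Prime] [CharP L p]
    (r : ℕ) (α : L) (j : ℕ) :
    (X ^ (p ^ r) + C α * X : L[X]) ^ ((p ^ r) ^ j) =
      X ^ ((p ^ r) ^ (j + 1)) + C (α ^ ((p ^ r) ^ j)) * X ^ ((p ^ r) ^ j) := by
  haveI : CharP L[X] p :=
    charP_of_injective_ringHom (C_injective : Function.Injective (C : L → L[X])) p
  rw [show ((p:ℕ) ^ r) ^ j = p ^ (r * j) by rw [← pow_mul],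
    show ((p:ℕ) ^ r) ^ (j + 1) = p ^ (r * (j + 1)) by rw [← pow_mul],
    add_pow_char_pow, ← pow_mul, mul_pow, ← C_pow]
  congr 2
  rw [← pow_add]
  congr 1
  ring

/-- Downward recursion producing the coefficients of the quotient `g`. -/
noncomputable def bSeq {L : Type*} [Field L] (a : ℕ → L) (α0 : L) (q m : ℕ) : ℕ → L
  | 0 => a (m + 1) - α0 ^ q ^ (m + 1)
  | k + 1 => a (m - k) - bSeq a α0 q m k * α0 ^ q ^ (m - k)

lemma key_lemma {L : Type*} [Field L] [IsAlgClosed L] (p : ℕ) [Fact p.Prime] [CharP L p]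
    (r : ℕ) (hr : 0 < r) (d : ℕ) (hd : 1 ≤ d) :
    ∀ a : ℕ → L, a 0 ≠ 0 →
    ∃ α : ℕ → L, (∀ i < d, α i ≠ 0) ∧
      X ^ (p ^ r) ^ d + (∑ i ∈ Finset.range d, C (a i) * X ^ (p ^ r) ^ i) =
        addPolyComp (p ^ r) α d ∧
      ∏ i ∈ Finset.range d, α i = a 0 := by
  have hp : 1 < p := (Fact.out : p.Prime).one_lt
  obtain ⟨q, hqdef⟩ : ∃ q, q = p ^ r := ⟨_, rfl⟩
  have hfrob : ∀ (α : L) (j : ℕ), (X ^ q + C α * X : L[X]) ^ q ^ j =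
      X ^ q ^ (j + 1) + C (α ^ q ^ j) * X ^ q ^ j := by
    rw [hqdef]; exact fun α j => addPoly_pow_q_pow p r α j
  rw [← hqdef]
  have hq : 1 < q := by rw [hqdef]; exact Nat.one_lt_pow hr.ne' hp
  clear hqdef
  have hqpow_pos : ∀ i : ℕ, 1 ≤ q ^ i := fun i => Nat.one_le_pow _ _ (by omega)
  induction d, hd using Nat.le_induction with
  | base =>
    intro a ha
    refine ⟨fun _ => a 0, fun i _ => ha, ?_, by simp⟩
    simp [addPolyComp, addPoly, pow_one]
  | succ d hd1 ih =>
    intro a ha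
    obtain ⟨m, rfl⟩ : ∃ m, d = m + 1 := ⟨d - 1, by omega⟩
    -- the polynomial f and the auxiliary polynomial P with f = X * P
    obtain ⟨f, hf⟩ : ∃ f : L[X],
        f = X ^ q ^ (m + 1 + 1) + ∑ i ∈ Finset.range (m + 1 + 1), C (a i) * X ^ q ^ i :=
      ⟨_, rfl⟩
    obtain ⟨P, hP⟩ : ∃ P : L[X],
        P = X ^ (q ^ (m + 1 + 1) - 1) +
          ∑ i ∈ Finset.range (m + 1 + 1), C (a i) * X ^ (q ^ i - 1) := ⟨_, rfl⟩
    have hfXP : f = X * P := by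
      rw [hP, hf, mul_add, Finset.mul_sum]
      congr 1
      · rw [← pow_succ',
          show q ^ (m + 1 + 1) - 1 + 1 = q ^ (m + 1 + 1) by
            have := hqpow_pos (m + 1 + 1); omega]
      · refine Finset.sum_congr rfl fun i _ => ?_
        rw [mul_left_comm, ← pow_succ',
          show q ^ i - 1 + 1 = q ^ i by have := hqpow_pos i; omega]
    -- P has a nonzero root
    have hPcoeff : P.coeff (q ^ (m + 1 + 1) - 1) = 1 := by
      rw [hP, coeff_add, coeff_X_pow, if_pos rfl, finset_sum_coeff]
      rw [Finset.sum_eq_zero, add_zero]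
      intro i hi
      rw [coeff_C_mul, coeff_X_pow, if_neg, mul_zero]
      have h1 : q ^ i < q ^ (m + 1 + 1) := Nat.pow_lt_pow_right hq (Finset.mem_range.mp hi)
      have h2 := hqpow_pos i
      omega
    have hPne : P ≠ 0 := fun h => by simp [h] at hPcoeff
    have hPdeg : P.degree ≠ 0 := by
      have h1 : q ^ (m + 1 + 1) - 1 ≤ P.natDegree :=
        le_natDegree_of_ne_zero (by rw [hPcoeff]; exact one_ne_zero)
      have h2 : q ≤ q ^ (m + 1 + 1) := Nat.le_self_pow (by omega) q
      rw [degree_eq_natDegree hPne]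
      intro h
      have : P.natDegree = 0 := by exact_mod_cast h
      omega
    obtain ⟨β, hβroot⟩ := IsAlgClosed.exists_root P hPdeg
    have hβP : P.eval β = 0 := hβroot
    have hβne : β ≠ 0 := by
      rintro rfl
      rw [hP] at hβP
      simp only [eval_add, eval_pow, eval_X, eval_finset_sum, eval_mul, eval_C] at hβP
      rw [zero_pow (by have := Nat.le_self_pow (by omega : m + 1 + 1 ≠ 0) q; omega), zero_add,
        Finset.sum_eq_single 0 (fun i _ hi => by
          have h : q ≤ q ^ i := Nat.le_self_pow hi q
          rw [zero_pow (by omega), mul_zero])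
        (fun h => absurd (Finset.mem_range.mpr (by omega)) h)] at hβP
      simp at hβP
      exact ha hβP
    have hβf : f.eval β = 0 := by rw [hfXP, eval_mul, hβP, mul_zero]
    -- the innermost factor
    obtain ⟨α0, hα0⟩ : ∃ x : L, x = -β ^ (q - 1) := ⟨_, rfl⟩
    have hα0ne : α0 ≠ 0 := by
      rw [hα0, neg_ne_zero]
      exact pow_ne_zero _ hβne
    have hhβ : (addPoly q α0).eval β = 0 := by
      rw [addPoly, hα0]
      simp only [eval_add, eval_pow, eval_X, eval_mul, eval_C]
      rw [neg_mul, ← pow_succ, show q - 1 + 1 = q by omega]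
      ring
    clear hα0
    -- coefficients of g
    set b : ℕ → L := fun j => bSeq a α0 q m (m - j) with hbdef
    have hbm : b m = a (m + 1) - α0 ^ q ^ (m + 1) := by
      rw [hbdef]
      simp only [Nat.sub_self]
      rfl
    have hbrec : ∀ j, j < m → b j = a (j + 1) - b (j + 1) * α0 ^ q ^ (j + 1) := by
      intro j hj
      rw [hbdef]
      simp only
      rw [show m - j = (m - (j + 1)) + 1 by omega, bSeq,
        show m - (m - (j + 1)) = j + 1 by omega]
    clear_value b
    clear hbdef
    have hb0α : a 0 ≠ 0 → True := fun _ => trivial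
    obtain ⟨g, hg⟩ : ∃ g : L[X],
        g = X ^ q ^ (m + 1) + ∑ j ∈ Finset.range (m + 1), C (b j) * X ^ q ^ j := ⟨_, rfl⟩
    -- the normal form N
    obtain ⟨N, hN⟩ : ∃ N : L[X],
        N = X ^ q ^ (m + 1 + 1) + C (b m + α0 ^ q ^ (m + 1)) * X ^ q ^ (m + 1) +
          (∑ j ∈ Finset.range m, C (b j + b (j + 1) * α0 ^ q ^ (j + 1)) * X ^ q ^ (j + 1)) +
          C (a 0) * X := ⟨_, rfl⟩
    have ha_top : a (m + 1) = b m + α0 ^ q ^ (m + 1) := by rw [hbm]; ring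
    have hLHS : f = N := by
      rw [hf, hN]
      have e1 : (∑ i ∈ Finset.range (m + 1 + 1), C (a i) * X ^ q ^ i : L[X])
          = (∑ j ∈ Finset.range (m + 1), C (a (j + 1)) * X ^ q ^ (j + 1)) +
            C (a 0) * X ^ q ^ 0 := Finset.sum_range_succ' _ (m + 1)
      have e2 : (∑ j ∈ Finset.range (m + 1), C (a (j + 1)) * X ^ q ^ (j + 1) : L[X])
          = (∑ j ∈ Finset.range m, C (a (j + 1)) * X ^ q ^ (j + 1)) +
            C (a (m + 1)) * X ^ q ^ (m + 1) := Finset.sum_range_succ _ m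
      have e3 : (∑ j ∈ Finset.range m, C (a (j + 1)) * X ^ q ^ (j + 1) : L[X])
          = ∑ j ∈ Finset.range m, C (b j + b (j + 1) * α0 ^ q ^ (j + 1)) * X ^ q ^ (j + 1) := by
        refine Finset.sum_congr rfl fun j hj => ?_
        congr 1
        congr 1
        rw [hbrec j (Finset.mem_range.mp hj)]
        ring
      rw [e1, e2, e3, ha_top, pow_zero, pow_one]
      ring
    have hRHS : g.comp (addPoly q α0) + C (a 0 - b 0 * α0) * X = N := by
      rw [hg, addPoly, add_comp, X_pow_comp, sum_comp, hfrob α0 (m + 1)]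
      have e3 : (∑ j ∈ Finset.range (m + 1),
            (C (b j) * X ^ q ^ j : L[X]).comp (X ^ q + C α0 * X))
          = ∑ j ∈ Finset.range (m + 1),
            (C (b j) * X ^ q ^ (j + 1) + C (b j * α0 ^ q ^ j) * X ^ q ^ j) := by
        refine Finset.sum_congr rfl fun j _ => ?_
        rw [mul_comp, C_comp, X_pow_comp, hfrob α0 j, C_mul]
        ring
      have e4 : (∑ j ∈ Finset.range (m + 1),
            (C (b j) * X ^ q ^ (j + 1) + C (b j * α0 ^ q ^ j) * X ^ q ^ j : L[X]))
          = (∑ j ∈ Finset.range (m + 1), C (b j) * X ^ q ^ (j + 1)) +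
            ∑ j ∈ Finset.range (m + 1), C (b j * α0 ^ q ^ j) * X ^ q ^ j :=
        Finset.sum_add_distrib
      have e5 : (∑ j ∈ Finset.range (m + 1), C (b j) * X ^ q ^ (j + 1) : L[X])
          = (∑ j ∈ Finset.range m, C (b j) * X ^ q ^ (j + 1)) +
            C (b m) * X ^ q ^ (m + 1) := Finset.sum_range_succ _ m
      have e6 : (∑ j ∈ Finset.range (m + 1), C (b j * α0 ^ q ^ j) * X ^ q ^ j : L[X])
          = (∑ j ∈ Finset.range m, C (b (j + 1) * α0 ^ q ^ (j + 1)) * X ^ q ^ (j + 1)) +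
            C (b 0 * α0 ^ q ^ 0) * X ^ q ^ 0 := Finset.sum_range_succ' _ m
      have e7 : (∑ j ∈ Finset.range m, C (b j) * X ^ q ^ (j + 1) : L[X]) +
            (∑ j ∈ Finset.range m, C (b (j + 1) * α0 ^ q ^ (j + 1)) * X ^ q ^ (j + 1))
          = ∑ j ∈ Finset.range m, C (b j + b (j + 1) * α0 ^ q ^ (j + 1)) * X ^ q ^ (j + 1) := by
        rw [← Finset.sum_add_distrib]
        exact Finset.sum_congr rfl fun j _ => by rw [C_add]; ring
      rw [e3, e4, e5, e6, hN, pow_zero, pow_one, pow_one, C_sub, C_mul, C_add]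
      linear_combination e7
    have hcomp : f = g.comp (addPoly q α0) + C (a 0 - b 0 * α0) * X := by
      rw [hRHS, hLHS]
    -- evaluate at β to get a 0 = b 0 * α0
    have hg0 : g.eval 0 = 0 := by
      rw [hg]
      simp only [eval_add, eval_pow, eval_X, eval_finset_sum, eval_mul, eval_C]
      rw [zero_pow (by have := hqpow_pos (m + 1); omega), zero_add]
      exact Finset.sum_eq_zero fun i _ => by
        rw [zero_pow (by have := hqpow_pos i; omega), mul_zero]
    have ha0 : a 0 = b 0 * α0 := by
      have heval := congrArg (Polynomial.eval β) hcomp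
      rw [hβf, eval_add, eval_comp, hhβ, hg0, eval_mul, eval_C, eval_X, zero_add] at heval
      rcases mul_eq_zero.mp heval.symm with h | h
      · exact sub_eq_zero.mp h
      · exact absurd h hβne
    have hb0 : b 0 ≠ 0 := fun h => ha (by rw [ha0, h, zero_mul])
    -- apply the induction hypothesis to g
    obtain ⟨α', hα'ne, hα'eq, hα'prod⟩ := ih b hb0
    refine ⟨fun n => if n = 0 then α0 else α' (n - 1), ?_, ?_, ?_⟩
    · intro i hi
      rcases i with _ | j
      · simpa using hα0ne
      · have := hα'ne j (by omega)
        simpa using this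
    · have h1 : addPolyComp q (fun n => if n = 0 then α0 else α' (n - 1)) (m + 1 + 1) =
          (addPolyComp q α' (m + 1)).comp (addPoly q α0) := by
        rw [addPolyComp_shift]
        congr 1
      have h2 : addPolyComp q α' (m + 1) = g := by rw [← hα'eq, hg]
      have hfg : f = g.comp (addPoly q α0) := by
        rw [hcomp, ← ha0, sub_self, map_zero, zero_mul, add_zero]
      rw [← hf, h1, h2, ← hfg]
    · rw [Finset.prod_range_succ']
      have h3 : (∏ k ∈ Finset.range (m + 1),
          (if k + 1 = 0 then α0 else α' (k + 1 - 1))) = ∏ k ∈ Finset.range (m + 1), α' k :=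
        Finset.prod_congr rfl fun k _ => by simp
      rw [h3, hα'prod]
      simp [← ha0]

/-- Over an algebraically closed field `L` containing the finite field `F` with `q`
elements, any separable monic `q`-linearized polynomial
`f = X^{q^d} + a_{d−1}X^{q^{d−1}} + ⋯ + a_0 X` with `a_0 ≠ 0` factors as a composite
`f_{α_d} ∘ ⋯ ∘ f_{α_1}` with all `α_i ≠ 0` and `α_1 ⋯ α_d = a_0`. -/
theorem stmt_17 {F : Type*} [Field F] [Fintype F] {L : Type*} [Field L] [IsAlgClosed L]
    [Algebra F L] (d : ℕ) (hd : 1 ≤ d) (a : ℕ → L) (ha : a 0 ≠ 0) :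
    ∃ α : ℕ → L, (∀ i < d, α i ≠ 0) ∧
      X ^ Fintype.card F ^ d +
          (∑ i ∈ Finset.range d, C (a i) * X ^ Fintype.card F ^ i) =
        addPolyComp (Fintype.card F) α d ∧
      ∏ i ∈ Finset.range d, α i = a 0 := by
  obtain ⟨p, hchar⟩ := CharP.exists F
  obtain ⟨n, hp, hcard⟩ := FiniteField.card F p
  haveI : Fact p.Prime := ⟨hp⟩
  haveI : CharP L p := charP_of_injective_algebraMap (algebraMap F L).injective p
  have hres := key_lemma p (n : ℕ) n.pos d hd a ha
  rw [← hcard] at hres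
  exact hres
end
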